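/- arXiv:2108.03858 — 5 statements merged into one kernel-verified Lean document; each statement's English description precedes it below -/
import Mathlib

section
/- Let q ∈ ℂ with q ≠ 0 and qⁿ ≠ 1 for all nonzero integers n. Let sequences h_k, x_k, g_k be given, with g_0 = 0 and h_n ≠ h_j whenever n > 0 and 0 ≤ j < n. Define Newton polynomials v_0(x) = 1 and v_k(x) = (x − x_0)(x − x_1)⋯(x − x_{k−1}) for k ≥ 1, and define monic polynomials u_n(x) = Σ_{k=0}^n c_{n,k} v_k(x) where c_{n,k} = Π_{j=k}^{n−1} g_{j+1}/(h_n − h_j). If L is a linear operator on polynomials satisfying L v_0 = h_0 v_0 and L v_n = h_n v_n + g_n v_{n−1} for n > 0, then L u_n = h_n u_n for all n ≥ 0. -/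
/-!
Write `L v_k = h_k v_k + g_k v_{k-1}`. Applying `L` to `u_n = ∑ c_{n,k} v_k`, the off-diagonal
part `g_{k+1} c_{n,k+1} v_k` equals `(h_n - h_k) c_{n,k} v_k`, because the telescoping product
satisfies `g_{k+1} c_{n,k+1} = (h_n - h_k) c_{n,k}` for `k < n`. Adding the diagonal part
`h_k c_{n,k} v_k` leaves `h_n c_{n,k} v_k` for each `k`, i.e. `L u_n = h_n u_n`.
-/

open Polynomial Finset

theorem map_sum_smul_eq_smul_of_bidiagonal {R M : Type*} [CommRing R]
    [AddCommGroup M] [Module R M] (L : M →ₗ[R] M) (h g c : ℕ → R) (v : ℕ → M) (n : ℕ)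
    (hL0 : L (v 0) = h 0 • v 0)
    (hL : ∀ k, L (v (k + 1)) = h (k + 1) • v (k + 1) + g (k + 1) • v k)
    (hc : ∀ k < n, g (k + 1) * c (k + 1) = (h n - h k) * c k) :
    L (∑ k ∈ range (n + 1), c k • v k) = h n • ∑ k ∈ range (n + 1), c k • v k := by
  have hoff : ∑ k ∈ range n, (c (k + 1) * g (k + 1)) • v k
      = ∑ k ∈ range (n + 1), ((h n - h k) * c k) • v k := by
    rw [sum_range_succ, sub_self, zero_mul, zero_smul, add_zero]
    exact sum_congr rfl fun k hk => by rw [mul_comm, hc k (mem_range.mp hk)]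
  calc L (∑ k ∈ range (n + 1), c k • v k)
      = ∑ k ∈ range (n + 1), (c k * h k) • v k
          + ∑ k ∈ range n, (c (k + 1) * g (k + 1)) • v k := by
        rw [sum_range_succ' (fun k => c k • v k), sum_range_succ' (fun k => (c k * h k) • v k)]
        simp only [map_add, map_sum, map_smul, hL0, hL, smul_add, smul_smul, sum_add_distrib]
        abel
    _ = h n • ∑ k ∈ range (n + 1), c k • v k := by
        rw [hoff, ← sum_add_distrib, smul_sum]
        exact sum_congr rfl fun k _ => by rw [← add_smul, smul_smul]; congr 1; ring

theorem mul_prod_Ico_div_sub_succ {K : Type*} [Field K] (h g : ℕ → K) {n k : ℕ} (hk : k < n)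
    (hne : h n ≠ h k) :
    g (k + 1) * ∏ j ∈ Ico (k + 1) n, g (j + 1) / (h n - h j)
      = (h n - h k) * ∏ j ∈ Ico k n, g (j + 1) / (h n - h j) := by
  rw [prod_eq_prod_Ico_succ_bot hk, ← mul_assoc, mul_div_cancel₀ _ (sub_ne_zero.mpr hne)]

theorem verdeStar_eigen_general
    (h g : ℕ → ℂ)
    (hh : ∀ n j : ℕ, 0 < n → j < n → h n ≠ h j)
    (v : ℕ → Polynomial ℂ)
    (c : ℕ → ℕ → ℂ)
    (hc : ∀ n k, c n k = ∏ j ∈ Ico k n, g (j + 1) / (h n - h j))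
    (u : ℕ → Polynomial ℂ)
    (hu : ∀ n, u n = ∑ k ∈ range (n + 1), C (c n k) * v k)
    (L : Polynomial ℂ →ₗ[ℂ] Polynomial ℂ)
    (hL0 : L (v 0) = C (h 0) * v 0)
    (hL : ∀ n, 0 < n → L (v n) = C (h n) * v n + C (g n) * v (n - 1)) :
    ∀ n, L (u n) = C (h n) * u n := by
  intro n
  simp only [hu, ← smul_eq_C_mul] at hL0 hL ⊢
  refine map_sum_smul_eq_smul_of_bidiagonal L h g (c n) v n hL0 (fun k => hL _ k.succ_pos) ?_
  intro k hk
  rw [hc, hc]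
  exact mul_prod_Ico_div_sub_succ h g hk (hh n k (k.zero_le.trans_lt hk) hk)

theorem verdeStar_eigen (q : ℂ) (hq : q ≠ 0) (hq1 : ∀ n : ℤ, n ≠ 0 → q ^ n ≠ 1)
    (h x g : ℕ → ℂ) (hg0 : g 0 = 0)
    (hh : ∀ n j : ℕ, 0 < n → j < n → h n ≠ h j)
    (v : ℕ → Polynomial ℂ)
    (hv : ∀ k, v k = ∏ j ∈ range k, (X - C (x j)))
    (c : ℕ → ℕ → ℂ)
    (hc : ∀ n k, c n k = ∏ j ∈ Ico k n, g (j + 1) / (h n - h j))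
    (u : ℕ → Polynomial ℂ)
    (hu : ∀ n, u n = ∑ k ∈ range (n + 1), C (c n k) * v k)
    (L : Polynomial ℂ →ₗ[ℂ] Polynomial ℂ)
    (hL0 : L (v 0) = C (h 0) * v 0)
    (hL : ∀ n, 0 < n → L (v n) = C (h n) * v n + C (g n) * v (n - 1)) :
    ∀ n, L (u n) = C (h n) * u n :=
  verdeStar_eigen_general h g hh v c hc u hu L hL0 hL
end

section
/- Let q, a, b, c, d ∈ ℂ with q ≠ 0, qⁿ ≠ 1 for nonzero integers n, a ≠ 0, abcd q^m ≠ 1 for m ≥ 0, and ab q^{k−1}, ac q^{k−1}, ad q^{k−1} ≠ 1 as needed. The monic Askey–Wilson polynomial u_n(x) = [(ab,ac,ad;q)_n / (a^n (abcd q^{n−1};q)_n)] · ₄φ₃(q^{−n}, abcd q^{n−1}, az, a z^{−1}; ab, ac, ad; q, q), with x = z + z^{−1}, equals Σ_{k=0}^n c_{n,k} v_k(x), where v_k(x) = Π_{j=0}^{k−1}(x − a q^j − a^{−1} q^{−j}), c_{n,k} = Π_{j=k}^{n−1} g_{j+1}/(h_n − h_j), h_k = q^{−k}(1 − q^k)(1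 − abcd q^{k−1}), and g_k = q^{−2k+1} a^{−1}(1 − ab q^{k−1})(1 − ac q^{k−1})(1 − ad q^{k−1})(1 − q^k). -/
open Finset

/-- q-shifted factorial (a;q)_k -/
noncomputable def qPoch (a q : ℂ) (k : ℕ) : ℂ := ∏ i ∈ range k, (1 - a * q ^ i)

/-- monic Askey-Wilson polynomial in the variable x = z + z⁻¹, via its ₄φ₃ representation -/
noncomputable def askeyWilson (q a b c d : ℂ) (n : ℕ) (z : ℂ) : ℂ :=
  qPoch (a * b) q n * qPoch (a * c) q n * qPoch (a * d) q n /
    (a ^ n * qPoch (a * b * c * d * q ^ ((n : ℤ) - 1)) q n) *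
  ∑ k ∈ range (n + 1),
    qPoch (q ^ (-(n : ℤ))) q k * qPoch (a * b * c * d * q ^ ((n : ℤ) - 1)) q k *
      qPoch (a * z) q k * qPoch (a * z⁻¹) q k /
    (qPoch q q k * qPoch (a * b) q k * qPoch (a * c) q k * qPoch (a * d) q k) * q ^ k

/-!
Since `(1 - a z q^j)(1 - a z⁻¹ q^j) = -a q^j (x - a q^j - a⁻¹ q^{-j})`, each term of the `₄φ₃` sum
is already a multiple of the Newton basis polynomial `v_k`, with an explicit coefficient
`awCoeff n k`. This coefficient is `1` at `k = n` and satisfies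
`awCoeff n k * (h_n - h_k) = g_{k+1} * awCoeff n (k + 1)`, a rational identity in `q^k`;
descending from `k = n` gives the product formula for `c_{n,k}`.
-/

theorem eq_prod_Ico_of_eq_mul_succ {M : Type*} [CommMonoid M] {f u : ℕ → M} {n : ℕ}
    (htop : f n = 1) (hstep : ∀ k < n, f k = u k * f (k + 1)) {k : ℕ} (hk : k ≤ n) :
    f k = ∏ j ∈ Ico k n, u j := by
  induction hk using Nat.decreasingInduction with
  | self => rw [htop, Ico_self, prod_empty]
  | of_succ k hk ih => rw [hstep k hk, ih, prod_eq_prod_Ico_succ_bot hk]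

section QPochhammer

variable {q : ℂ}

theorem qPoch_succ (a : ℂ) (k : ℕ) : qPoch a q (k + 1) = qPoch a q k * (1 - a * q ^ k) :=
  prod_range_succ _ _

theorem qPoch_ne_zero {a : ℂ} {k : ℕ} (h : ∀ i < k, a * q ^ i ≠ 1) : qPoch a q k ≠ 0 :=
  prod_ne_zero_iff.mpr fun i hi => sub_ne_zero.mpr (h i (mem_range.mp hi)).symm

theorem qPoch_self_ne_zero (hq : ∀ m : ℕ, q ^ (m + 1) ≠ 1) (k : ℕ) : qPoch q q k ≠ 0 :=
  qPoch_ne_zero fun i _ => by rw [← pow_succ']; exact hq i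

theorem qPoch_mul_zpow_sub_one_ne_zero {s : ℂ} (hs : ∀ m : ℕ, s * q ^ m ≠ 1)
    (n : ℕ) : qPoch (s * q ^ ((n : ℤ) - 1)) q n ≠ 0 := by
  refine qPoch_ne_zero fun i hi => ?_
  obtain ⟨n, rfl⟩ := Nat.exists_eq_add_of_lt hi
  rw [show ((i + n + 1 : ℕ) : ℤ) - 1 = ((i + n : ℕ) : ℤ) by push_cast; ring, zpow_natCast,
    mul_assoc, ← pow_add]
  exact hs _

theorem qPoch_inv_pow_mul_prod (hq : q ≠ 0) (n : ℕ) :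
    qPoch (q ^ n)⁻¹ q n * ∏ j ∈ range n, -q ^ (j + 1) = qPoch q q n := by
  rw [qPoch, ← prod_range_reflect (fun i => 1 - (q ^ n)⁻¹ * q ^ i), ← prod_mul_distrib, qPoch]
  refine prod_congr rfl fun j hj => ?_
  have hn : q ^ n = q ^ (n - 1 - j) * q ^ (j + 1) := by
    rw [← pow_add]; congr 1; have := mem_range.mp hj; omega
  rw [hn]
  field_simp
  ring

theorem qPoch_mul_qPoch_inv {a z : ℂ} (ha : a ≠ 0) (hq : q ≠ 0) (hz : z ≠ 0) (k : ℕ) :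
    qPoch (a * z) q k * qPoch (a * z⁻¹) q k =
      (∏ j ∈ range k, -(a * q ^ j)) *
        ∏ j ∈ range k, (z + z⁻¹ - a * q ^ j - a⁻¹ * q ^ (-(j : ℤ))) := by
  rw [qPoch, qPoch, ← prod_mul_distrib, ← prod_mul_distrib]
  refine prod_congr rfl fun j _ => ?_
  rw [zpow_neg, zpow_natCast]
  field_simp
  ring

end QPochhammer

section AskeyWilson

variable {q a b c d : ℂ}

noncomputable def awH (q s : ℂ) (k : ℕ) : ℂ :=
  q ^ (-(k : ℤ)) * (1 - q ^ k) * (1 - s * q ^ ((k : ℤ) - 1))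

noncomputable def awG (q a b c d : ℂ) (k : ℕ) : ℂ :=
  q ^ (-2 * (k : ℤ) + 1) * a⁻¹ * (1 - a * b * q ^ ((k : ℤ) - 1)) *
    (1 - a * c * q ^ ((k : ℤ) - 1)) * (1 - a * d * q ^ ((k : ℤ) - 1)) * (1 - q ^ k)

theorem awH_sub (hq : q ≠ 0) (s : ℂ) (N k : ℕ) :
    awH q s N - awH q s k = (q ^ N - q ^ k) * (s * q⁻¹ - (q ^ (N + k))⁻¹) := by
  simp only [awH, zpow_neg, zpow_sub_one₀ hq, zpow_natCast]
  field_simp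
  ring

theorem awH_sub_ne_zero {s : ℂ} (hq : q ≠ 0) (hqn : ∀ m : ℕ, q ^ (m + 1) ≠ 1)
    (hs : ∀ m : ℕ, s * q ^ m ≠ 1) {N k : ℕ} (hk : k < N) : awH q s N - awH q s k ≠ 0 := by
  obtain ⟨m, rfl⟩ := Nat.exists_eq_add_of_lt hk
  rw [awH_sub hq]
  have hpow : q ^ (k + m + 1) - q ^ k = q ^ k * (q ^ (m + 1) - 1) := by ring
  have hinv : s * q⁻¹ - (q ^ (k + m + 1 + k))⁻¹ =
      (s * q ^ (k + m + k) - 1) * (q ^ (k + m + 1 + k))⁻¹ := by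
    field_simp
    ring
  rw [hpow, hinv]
  exact mul_ne_zero (mul_ne_zero (pow_ne_zero _ hq) (sub_ne_zero.mpr (hqn m)))
    (mul_ne_zero (sub_ne_zero.mpr (hs _)) (inv_ne_zero (pow_ne_zero _ hq)))

theorem awG_succ (k : ℕ) :
    awG q a b c d (k + 1) = (1 - a * b * q ^ k) * (1 - a * c * q ^ k) * (1 - a * d * q ^ k) *
      (1 - q ^ (k + 1)) * (a * q ^ (2 * k + 1))⁻¹ := by
  rw [awG, show -2 * ((k + 1 : ℕ) : ℤ) + 1 = -((2 * k + 1 : ℕ) : ℤ) by push_cast; ring,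
    show ((k + 1 : ℕ) : ℤ) - 1 = (k : ℤ) by push_cast; ring, zpow_neg, zpow_natCast, zpow_natCast,
    mul_inv]
  ring

noncomputable def awCoeff (q a b c d : ℂ) (n k : ℕ) : ℂ :=
  qPoch (a * b) q n * qPoch (a * c) q n * qPoch (a * d) q n /
      (a ^ n * qPoch (a * b * c * d * q ^ ((n : ℤ) - 1)) q n) *
    (qPoch (q ^ (-(n : ℤ))) q k * qPoch (a * b * c * d * q ^ ((n : ℤ) - 1)) q k /
        (qPoch q q k * qPoch (a * b) q k * qPoch (a * c) q k * qPoch (a * d) q k) * q ^ k *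
      ∏ j ∈ range k, -(a * q ^ j))

theorem askeyWilson_eq_sum_awCoeff {z : ℂ} (ha : a ≠ 0) (hq : q ≠ 0) (hz : z ≠ 0) (n : ℕ) :
    askeyWilson q a b c d n z = ∑ k ∈ range (n + 1), awCoeff q a b c d n k *
      ∏ j ∈ range k, (z + z⁻¹ - a * q ^ j - a⁻¹ * q ^ (-(j : ℤ))) := by
  rw [askeyWilson, mul_sum]
  refine sum_congr rfl fun k _ => ?_
  rw [mul_assoc (_ * _) (qPoch (a * z) q k), qPoch_mul_qPoch_inv ha hq hz, awCoeff]
  ring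

theorem awCoeff_self (ha : a ≠ 0) (hq : q ≠ 0) (hqn : ∀ m : ℕ, q ^ (m + 1) ≠ 1)
    (habcd : ∀ m : ℕ, a * b * c * d * q ^ m ≠ 1) (hab : ∀ m : ℕ, a * b * q ^ m ≠ 1)
    (hac : ∀ m : ℕ, a * c * q ^ m ≠ 1) (had : ∀ m : ℕ, a * d * q ^ m ≠ 1) (n : ℕ) :
    awCoeff q a b c d n n = 1 := by
  have hα := qPoch_mul_zpow_sub_one_ne_zero habcd n
  have hqq := qPoch_self_ne_zero hqn n
  have hQab : qPoch (a * b) q n ≠ 0 := qPoch_ne_zero fun i _ => hab i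
  have hQac : qPoch (a * c) q n ≠ 0 := qPoch_ne_zero fun i _ => hac i
  have hQad : qPoch (a * d) q n ≠ 0 := qPoch_ne_zero fun i _ => had i
  have hprod : q ^ n * ∏ j ∈ range n, -(a * q ^ j) = a ^ n * ∏ j ∈ range n, -q ^ (j + 1) := by
    rw [← card_range n, ← prod_const, ← prod_const, card_range, ← prod_mul_distrib,
      ← prod_mul_distrib]
    exact prod_congr rfl fun j _ => by ring
  have hinv := qPoch_inv_pow_mul_prod hq n
  rw [awCoeff, zpow_neg, zpow_natCast]
  generalize qPoch (q ^ n)⁻¹ q n = Q at hinv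
  field_simp
  linear_combination Q * hprod + a ^ n * hinv

theorem awCoeff_mul_awH_sub (ha : a ≠ 0) (hq : q ≠ 0) (hqn : ∀ m : ℕ, q ^ (m + 1) ≠ 1)
    (hab : ∀ m : ℕ, a * b * q ^ m ≠ 1) (hac : ∀ m : ℕ, a * c * q ^ m ≠ 1)
    (had : ∀ m : ℕ, a * d * q ^ m ≠ 1) (n k : ℕ) :
    awCoeff q a b c d n k * (awH q (a * b * c * d) n - awH q (a * b * c * d) k) =
      awG q a b c d (k + 1) * awCoeff q a b c d n (k + 1) := by
  have hqq := qPoch_self_ne_zero hqn k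
  have hQab : qPoch (a * b) q k ≠ 0 := qPoch_ne_zero fun i _ => hab i
  have hQac : qPoch (a * c) q k ≠ 0 := qPoch_ne_zero fun i _ => hac i
  have hQad : qPoch (a * d) q k ≠ 0 := qPoch_ne_zero fun i _ => had i
  have hq_k : 1 - q * q ^ k ≠ 0 := sub_ne_zero.mpr (by rw [← pow_succ']; exact (hqn k).symm)
  have hab_k : 1 - a * b * q ^ k ≠ 0 := sub_ne_zero.mpr (hab k).symm
  have hac_k : 1 - a * c * q ^ k ≠ 0 := sub_ne_zero.mpr (hac k).symm
  have had_k : 1 - a * d * q ^ k ≠ 0 := sub_ne_zero.mpr (had k).symm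
  simp only [awCoeff, qPoch_succ, prod_range_succ, pow_succ, awH_sub hq, awG_succ]
  simp only [zpow_neg, zpow_sub_one₀ hq, zpow_natCast]
  field_simp
  ring

end AskeyWilson

theorem askeyWilson_newton_expansion (q a b c d : ℂ)
    (hq : q ≠ 0) (hq1 : ∀ n : ℤ, n ≠ 0 → q ^ n ≠ 1) (ha : a ≠ 0)
    (habcd : ∀ m : ℕ, a * b * c * d * q ^ m ≠ 1)
    (hab : ∀ m : ℕ, a * b * q ^ m ≠ 1) (hac : ∀ m : ℕ, a * c * q ^ m ≠ 1)
    (had : ∀ m : ℕ, a * d * q ^ m ≠ 1)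
    (h g : ℕ → ℂ)
    (hh : ∀ k : ℕ, h k = q ^ (-(k : ℤ)) * (1 - q ^ k) * (1 - a * b * c * d * q ^ ((k : ℤ) - 1)))
    (hg : ∀ k : ℕ, g k = q ^ (-2 * (k : ℤ) + 1) * a⁻¹ * (1 - a * b * q ^ ((k : ℤ) - 1)) *
      (1 - a * c * q ^ ((k : ℤ) - 1)) * (1 - a * d * q ^ ((k : ℤ) - 1)) * (1 - q ^ k))
    (cf : ℕ → ℕ → ℂ)
    (hcf : ∀ n k, cf n k = ∏ j ∈ Ico k n, g (j + 1) / (h n - h j))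
    (n : ℕ) (z : ℂ) (hz : z ≠ 0) :
    askeyWilson q a b c d n z =
      ∑ k ∈ range (n + 1), cf n k *
        ∏ j ∈ range k, ((z + z⁻¹) - a * q ^ j - a⁻¹ * q ^ (-(j : ℤ))) := by
  have hqn : ∀ m : ℕ, q ^ (m + 1) ≠ 1 := fun m => by
    simpa only [zpow_natCast] using hq1 (m + 1 : ℕ) (by omega)
  obtain rfl : h = awH q (a * b * c * d) := funext hh
  obtain rfl : g = awG q a b c d := funext hg
  rw [askeyWilson_eq_sum_awCoeff ha hq hz]
  refine sum_congr rfl fun k hk => ?_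
  rw [hcf, ← eq_prod_Ico_of_eq_mul_succ (awCoeff_self ha hq hqn habcd hab hac had n)
    (fun j hj => ?_) (mem_range_succ_iff.mp hk)]
  rw [div_mul_eq_mul_div, eq_div_iff (awH_sub_ne_zero hq hqn habcd hj)]
  exact awCoeff_mul_awH_sub ha hq hqn hab hac had n j
end

section
/- Let q, a, b ∈ ℂ with q ≠ 0, qⁿ ≠ 1 for nonzero n. Then for each n ≥ 0, lim_{a→∞} a^{−n} Q_n(½ a x; a, a b | q) = U_n^{(b)}(x; q), where Q_n(½x; a, b | q) = (ab; q)_n a^{−n} ₃φ₂(q^{−n}, az, a z^{−1}; ab, 0; q, q) (x = z + z^{−1}) is the Al-Salam–Chihara polynomial and U_n^{(b)}(x; q) = (−b)^n q^{n(n−1)/2} ₂φ₁(q^{−n}, x^{−1}; 0; q, q b^{−1} x) is the Al-Salam–Carlitz I polynomial. -/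
open Finset Filter

/-- Al-Salam–Chihara polynomial Q_n(x/2; A,B | q) as a function of x = z + z⁻¹,
via the ₃φ₂ representation, where (Az;q)_k (Az⁻¹;q)_k = ∏_{i<k} (1 - A q^i x + A² q^{2i})
and the lower parameter 0 contributes (0;q)_k = 1. -/
noncomputable def alSalamChihara (q A B : ℂ) (n : ℕ) (x : ℂ) : ℂ :=
  qPoch (A * B) q n * (A⁻¹) ^ n *
  ∑ k ∈ range (n + 1),
    qPoch (q ^ (-(n : ℤ))) q k / (qPoch q q k * qPoch (A * B) q k) *
    (∏ i ∈ range k, (1 - A * q ^ i * x + A ^ 2 * q ^ (2 * i))) * q ^ k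

/-- Al-Salam–Carlitz I polynomial U_n^{(b)}(x;q) via its ₂φ₁ representation. -/
noncomputable def alSalamCarlitzI (q b : ℂ) (n : ℕ) (x : ℂ) : ℂ :=
  (-b) ^ n * q ^ (n * (n - 1) / 2) *
  ∑ k ∈ range (n + 1),
    qPoch (q ^ (-(n : ℤ))) q k * qPoch x⁻¹ q k / qPoch q q k * (q * b⁻¹ * x) ^ k

/-!
Put `s = a⁻²`. Dividing `(a²b; q)_n` by `(a²b; q)_k` leaves `∏_{k ≤ i < n} (1 - a²b qⁱ)`, and
distributing `a⁻²ⁿ` over the `n - k` factors of this product and the `k` factors of the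
`₃φ₂`-numerator turns `a⁻ⁿ Q_n(½ a x; a, a b | q)` into a polynomial in `s`, as soon as
`(a²b; q)_n ≠ 0`, which holds for all large `a`. The limit is then the value of this
polynomial at `s = 0`, and there the factors reduce to `-b qⁱ` and `-x qⁱ (1 - x⁻¹ qⁱ)`,
whose powers of `q` add up to `q^(n(n-1)/2)`.
-/

open Bornology Topology

lemma prod_const_mul_pow {M : Type*} [CommMonoid M] (s : Finset ℕ) (c q : M) :
    ∏ i ∈ s, c * q ^ i = c ^ #s * q ^ ∑ i ∈ s, i := by
  rw [prod_mul_distrib, prod_const, prod_pow_eq_pow_sum]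

lemma eventually_sq_mul_ne_one {𝕜 : Type*} [NormedDivisionRing 𝕜] (c : 𝕜) :
    ∀ᶠ a in cobounded 𝕜, a ^ 2 * c ≠ 1 := by
  rcases eq_or_ne c 0 with rfl | hc
  · simp
  exact ((tendsto_mul_right_cobounded hc).comp
    (tendsto_pow_cobounded_cobounded two_ne_zero)).eventually_ne_cobounded 1

lemma qPoch_div_qPoch {A q : ℂ} {k n : ℕ} (hkn : k ≤ n) (hA : qPoch A q k ≠ 0) :
    qPoch A q n / qPoch A q k = ∏ i ∈ Ico k n, (1 - A * q ^ i) := by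
  rw [div_eq_iff hA, qPoch, qPoch, ← prod_range_mul_prod_Ico _ hkn, mul_comm]

lemma eventually_qPoch_sq_mul_ne_zero (q c : ℂ) (n : ℕ) :
    ∀ᶠ a in cobounded ℂ, qPoch (a ^ 2 * c) q n ≠ 0 := by
  simp only [qPoch, prod_ne_zero_iff, eventually_all_finset]
  intro i _
  filter_upwards [eventually_sq_mul_ne_one (c * q ^ i)] with a ha
  rw [sub_ne_zero, mul_assoc]
  exact ha.symm

/-- `a⁻ⁿ Q_n(½ a x; a, a b | q)` as a polynomial in `s = a⁻²`. -/
noncomputable def rescaledAlSalamChihara (q b : ℂ) (n : ℕ) (x s : ℂ) : ℂ :=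
  ∑ k ∈ range (n + 1), qPoch (q ^ (-(n : ℤ))) q k / qPoch q q k * q ^ k *
    ((∏ i ∈ Ico k n, (s - b * q ^ i)) * ∏ i ∈ range k, (s - q ^ i * x + q ^ (2 * i)))

lemma continuous_rescaledAlSalamChihara (q b : ℂ) (n : ℕ) (x : ℂ) :
    Continuous (rescaledAlSalamChihara q b n x) := by
  unfold rescaledAlSalamChihara
  fun_prop

lemma inv_pow_mul_alSalamChihara {q a b : ℂ} {n : ℕ} (x : ℂ) (ha : a ≠ 0)
    (hQ : qPoch (a ^ 2 * b) q n ≠ 0) :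
    a⁻¹ ^ n * alSalamChihara q a (a * b) n (a * x) = rescaledAlSalamChihara q b n x (a⁻¹ ^ 2) := by
  rw [alSalamChihara, rescaledAlSalamChihara, mul_sum, mul_sum, show a * (a * b) = a ^ 2 * b by ring]
  refine sum_congr rfl fun k hk => ?_
  obtain ⟨m, rfl⟩ := Nat.exists_eq_add_of_le (Nat.lt_succ_iff.mp (mem_range.mp hk))
  have hQk : qPoch (a ^ 2 * b) q k ≠ 0 := by
    rw [qPoch, ← prod_range_mul_prod_Ico _ (Nat.le_add_right k m)] at hQ
    exact left_ne_zero_of_mul hQ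
  have hS : (a⁻¹ ^ 2) ^ m * ∏ i ∈ Ico k (k + m), (1 - a ^ 2 * b * q ^ i)
      = ∏ i ∈ Ico k (k + m), (a⁻¹ ^ 2 - b * q ^ i) := by
    have h : ∀ i ∈ Ico k (k + m), a⁻¹ ^ 2 - b * q ^ i = a⁻¹ ^ 2 * (1 - a ^ 2 * b * q ^ i) :=
      fun i _ => by field_simp
    rw [prod_congr rfl h, ← pow_card_mul_prod, Nat.card_Ico, Nat.add_sub_cancel_left]
  have hR : (a⁻¹ ^ 2) ^ k * ∏ i ∈ range k, (1 - a * q ^ i * (a * x) + a ^ 2 * q ^ (2 * i))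
      = ∏ i ∈ range k, (a⁻¹ ^ 2 - q ^ i * x + q ^ (2 * i)) := by
    have h : ∀ i ∈ range k, a⁻¹ ^ 2 - q ^ i * x + q ^ (2 * i)
        = a⁻¹ ^ 2 * (1 - a * q ^ i * (a * x) + a ^ 2 * q ^ (2 * i)) :=
      fun i _ => by field_simp
    rw [prod_congr rfl h, ← pow_card_mul_prod, card_range]
  rw [← hS, ← hR, ← qPoch_div_qPoch (Nat.le_add_right k m) hQk]
  ring

lemma rescaledAlSalamChihara_zero {q b x : ℂ} (n : ℕ) (hb : b ≠ 0) (hx : x ≠ 0) :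
    rescaledAlSalamChihara q b n x 0 = alSalamCarlitzI q b n x := by
  rw [rescaledAlSalamChihara, alSalamCarlitzI, mul_sum]
  refine sum_congr rfl fun k hk => ?_
  obtain ⟨m, rfl⟩ := Nat.exists_eq_add_of_le (Nat.lt_succ_iff.mp (mem_range.mp hk))
  have hIco : ∏ i ∈ Ico k (k + m), (0 - b * q ^ i) = (-b) ^ m * q ^ ∑ i ∈ Ico k (k + m), i := by
    simp_rw [zero_sub, ← neg_mul]
    rw [prod_const_mul_pow, Nat.card_Ico, Nat.add_sub_cancel_left]
  have hrange : ∏ i ∈ range k, (0 - q ^ i * x + q ^ (2 * i))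
      = (-x) ^ k * q ^ (∑ i ∈ range k, i) * qPoch x⁻¹ q k := by
    have h : ∀ i ∈ range k, 0 - q ^ i * x + q ^ (2 * i) = -x * q ^ i * (1 - x⁻¹ * q ^ i) :=
      fun i _ => by field_simp; ring
    rw [prod_congr rfl h, prod_mul_distrib, prod_const_mul_pow, card_range, qPoch]
  have hgauss : q ^ ((k + m) * (k + m - 1) / 2)
      = q ^ (∑ i ∈ range k, i) * q ^ ∑ i ∈ Ico k (k + m), i := by
    rw [← sum_range_id, ← sum_range_add_sum_Ico _ (Nat.le_add_right k m), pow_add]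
  rw [hIco, hrange, hgauss, mul_pow, mul_pow, inv_pow]
  field_simp
  ring

theorem alSalamChihara_to_alSalamCarlitzI_general (q b : ℂ)
    (hb : b ≠ 0) (n : ℕ) (x : ℂ) (hx : x ≠ 0) :
    Tendsto (fun a : ℂ => (a⁻¹) ^ n * alSalamChihara q a (a * b) n (a * x))
      (Bornology.cobounded ℂ) (nhds (alSalamCarlitzI q b n x)) := by
  have hs : Tendsto (fun a : ℂ => a⁻¹ ^ 2) (cobounded ℂ) (𝓝 0) := by
    simpa using (tendsto_inv₀_cobounded (α := ℂ)).pow 2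
  rw [← rescaledAlSalamChihara_zero n hb hx]
  refine (((continuous_rescaledAlSalamChihara q b n x).tendsto 0).comp hs).congr' ?_
  filter_upwards [eventually_ne_cobounded 0, eventually_qPoch_sq_mul_ne_zero q b n] with a ha hQ
  exact (inv_pow_mul_alSalamChihara x ha hQ).symm

theorem alSalamChihara_to_alSalamCarlitzI (q b : ℂ)
    (hq : q ≠ 0) (hq1 : ∀ n : ℤ, n ≠ 0 → q ^ n ≠ 1)
    (hb : b ≠ 0) (n : ℕ) (x : ℂ) (hx : x ≠ 0) :
    Tendsto (fun a : ℂ => (a⁻¹) ^ n * alSalamChihara q a (a * b) n (a * x))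
      (Bornology.cobounded ℂ) (nhds (alSalamCarlitzI q b n x)) :=
  alSalamChihara_to_alSalamCarlitzI_general q b hb n x hx
end

section
/- Let q ∈ ℂ, q ≠ 0, qⁿ ≠ 1 for nonzero n, and b ∈ ℂ. With x_k = q^{−k}, h_k = q^{−k} − 1, g_k = (1 − q^{−k})(b − q^{1−k}), v_k(x) = Π_{j=0}^{k−1}(x − q^{−j}), and c_{n,k} = Π_{j=k}^{n−1} g_{j+1}/(h_n − h_j), the polynomial u_n(x) = Σ_{k=0}^n c_{n,k} v_k(x) equals xⁿ (b x^{−1}; q)_n = Π_{j=0}^{n−1}(x − b q^j). -/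
/-!
Write `p = q⁻¹`, so that the nodes are `x_k = p^k`. It suffices that `u_{n+1} = u_n · (X - b q^n)`;
as `v_k · (X - a) = v_{k+1} + (x_k - a) v_k`, this amounts to the coefficients satisfying the
Pascal-type recurrence `c_{n+1,k+1} = c_{n,k} + (x_{k+1} - b q^n) c_{n,k+1}`, together with
`c_{n+1,0} = (1 - b q^n) c_{n,0}` and `c_{n,n} = 1`. Passing from `n` to `n + 1` in the product
defining `c_{n,k}` adds the factor `g_{n+1} / (h_{n+1} - h_n)` and changes the denominators by the
telescoping product `∏_{k ≤ j < n} (p^n - p^j) / (p^{n+1} - p^j) = (p - 1) / (p^{n+1-k} - 1)`;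
after that, both recurrences are rational identities in `p`, `b`, `p^k` and `p^n`.
-/

open Polynomial Finset

section NewtonBasis

variable {R : Type*} [CommRing R]

noncomputable def newtonBasis (x : ℕ → R) (k : ℕ) : R[X] := ∏ j ∈ range k, (X - C (x j))

theorem newtonBasis_mul_X_sub_C (x : ℕ → R) (a : R) (k : ℕ) :
    newtonBasis x k * (X - C a) = newtonBasis x (k + 1) + C (x k - a) * newtonBasis x k := by
  rw [newtonBasis, newtonBasis, prod_range_succ, C_sub]
  ring

theorem sum_C_mul_newtonBasis_eq_prod {x a : ℕ → R} {c : ℕ → ℕ → R}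
    (hdiag : ∀ n, c n n = 1)
    (hzero : ∀ n, c (n + 1) 0 = (x 0 - a n) * c n 0)
    (hsucc : ∀ n k, k < n → c (n + 1) (k + 1) = c n k + (x (k + 1) - a n) * c n (k + 1))
    (n : ℕ) :
    ∑ k ∈ range (n + 1), C (c n k) * newtonBasis x k = ∏ j ∈ range n, (X - C (a j)) := by
  induction n with
  | zero => simp [hdiag, newtonBasis]
  | succ n ih =>
    rw [prod_range_succ, ← ih, sum_mul]
    calc ∑ k ∈ range (n + 2), C (c (n + 1) k) * newtonBasis x k
        = ∑ k ∈ range n, C (c (n + 1) (k + 1)) * newtonBasis x (k + 1)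
            + C (c (n + 1) (n + 1)) * newtonBasis x (n + 1)
            + C (c (n + 1) 0) * newtonBasis x 0 := by
          rw [sum_range_succ', sum_range_succ]
      _ = ∑ k ∈ range (n + 1), C (c n k) * newtonBasis x (k + 1)
            + ∑ k ∈ range (n + 1), C (c n k) * (C (x k - a n) * newtonBasis x k) := by
          have hstep : ∀ k ∈ range n, C (c (n + 1) (k + 1)) * newtonBasis x (k + 1)
              = C (c n k) * newtonBasis x (k + 1)
                + C (c n (k + 1)) * (C (x (k + 1) - a n) * newtonBasis x (k + 1)) := by
            intro k hk
            rw [hsucc n k (mem_range.mp hk), C_add, C_mul]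
            ring
          rw [sum_congr rfl hstep, sum_add_distrib, sum_range_succ,
            sum_range_succ' (fun k => C (c n k) * (C (x k - a n) * _)), hdiag, hdiag, hzero, C_mul]
          ring
      _ = ∑ k ∈ range (n + 1), C (c n k) * newtonBasis x k * (X - C (a n)) := by
          simp only [mul_assoc, newtonBasis_mul_X_sub_C, mul_add, sum_add_distrib]

end NewtonBasis

section QCoeff

variable {K : Type*} [Field K]

theorem prod_Ico_pow_sub_pow_succ (p : K) (m t : ℕ) :
    ∏ j ∈ Ico m (m + t + 1), (p ^ (m + t + 1) - p ^ j)
      = p ^ (m + t) * (p ^ (t + 1) - 1) * ∏ j ∈ Ico m (m + t), (p ^ (m + t) - p ^ j) := by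
  induction t generalizing m with
  | zero =>
    simp only [add_zero, Nat.Ico_succ_singleton, prod_singleton, Ico_self, prod_empty, mul_one]
    ring
  | succ t ih =>
    have h := ih (m + 1)
    rw [show m + 1 + t = m + (t + 1) by omega] at h
    rw [prod_eq_prod_Ico_succ_bot (by omega : m < m + (t + 1) + 1), h,
      prod_eq_prod_Ico_succ_bot (by omega : m < m + (t + 1))]
    ring

variable (p b : K)

/-- The paper's `c_{n,k}` in terms of `p = q⁻¹`: there `g_{j+1} = (1 - p^{j+1}) (b - p^j)` and
`h_n - h_j = p^n - p^j`. -/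
def verdeStarCoeff (n k : ℕ) : K :=
  ∏ j ∈ Ico k n, (1 - p ^ (j + 1)) * (b - p ^ j) / (p ^ n - p ^ j)

@[simp] theorem verdeStarCoeff_self (n : ℕ) : verdeStarCoeff p b n n = 1 := by
  simp [verdeStarCoeff]

theorem verdeStarCoeff_eq_mul_succ {n k : ℕ} (hk : k < n) :
    verdeStarCoeff p b n k
      = (1 - p ^ (k + 1)) * (b - p ^ k) / (p ^ n - p ^ k) * verdeStarCoeff p b n (k + 1) :=
  prod_eq_prod_Ico_succ_bot hk _

theorem verdeStarCoeff_succ_left (m t : ℕ) :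
    verdeStarCoeff p b (m + t + 1) m
      = verdeStarCoeff p b (m + t) m
        * ((1 - p ^ (m + t + 1)) * (b - p ^ (m + t)) / (p ^ (m + t) * (p ^ (t + 1) - 1))) := by
  simp only [verdeStarCoeff, prod_div_distrib]
  rw [prod_Ico_succ_top (by omega), prod_Ico_pow_sub_pow_succ, div_mul_div_comm]
  ring

variable {p}

theorem pow_sub_pow_ne_zero (hp0 : p ≠ 0) (hp : ∀ i : ℕ, i ≠ 0 → p ^ i ≠ 1) {k n : ℕ}
    (hkn : k < n) : p ^ n - p ^ k ≠ 0 := by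
  obtain ⟨t, rfl⟩ : ∃ t, n = k + (t + 1) := ⟨n - k - 1, by omega⟩
  refine sub_ne_zero.mpr fun h => hp (t + 1) t.succ_ne_zero (mul_left_cancel₀ (pow_ne_zero k hp0) ?_)
  rw [← pow_add, h, mul_one]

theorem verdeStarCoeff_succ_zero (hp0 : p ≠ 0) (hp : ∀ i : ℕ, i ≠ 0 → p ^ i ≠ 1) (n : ℕ) :
    verdeStarCoeff p b (n + 1) 0 = (1 - b * (p ^ n)⁻¹) * verdeStarCoeff p b n 0 := by
  have h := verdeStarCoeff_succ_left p b 0 n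
  simp only [zero_add] at h
  have hn : p ^ (n + 1) - 1 ≠ 0 := sub_ne_zero.mpr (hp _ n.succ_ne_zero)
  have hpn : p ^ n ≠ 0 := pow_ne_zero _ hp0
  rw [h, mul_comm]
  congr 1
  field_simp
  ring

theorem verdeStarCoeff_succ_succ (hp0 : p ≠ 0) (hp : ∀ i : ℕ, i ≠ 0 → p ^ i ≠ 1) {n k : ℕ}
    (hk : k < n) :
    verdeStarCoeff p b (n + 1) (k + 1)
      = verdeStarCoeff p b n k + (p ^ (k + 1) - b * (p ^ n)⁻¹) * verdeStarCoeff p b n (k + 1) := by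
  obtain ⟨t, rfl⟩ : ∃ t, n = k + 1 + t := ⟨n - (k + 1), by omega⟩
  rw [verdeStarCoeff_eq_mul_succ p b hk, verdeStarCoeff_succ_left, ← add_mul, mul_comm]
  congr 1
  have ht : p * p ^ t - 1 ≠ 0 := by
    rw [← pow_succ']
    exact sub_ne_zero.mpr (hp _ t.succ_ne_zero)
  have hkt := pow_sub_pow_ne_zero hp0 hp hk
  have hpk : p ^ k ≠ 0 := pow_ne_zero _ hp0
  have hpt : p ^ t ≠ 0 := pow_ne_zero _ hp0
  simp only [pow_add, pow_one] at hkt ⊢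
  field_simp
  ring

end QCoeff

theorem verdeStar_case4b (q b : ℂ)
    (hq : q ≠ 0) (hq1 : ∀ n : ℤ, n ≠ 0 → q ^ n ≠ 1)
    (h x g : ℕ → ℂ)
    (hx : ∀ k, x k = q⁻¹ ^ k)
    (hh : ∀ k, h k = q⁻¹ ^ k - 1)
    (hg : ∀ k, g k = (1 - q⁻¹ ^ k) * (b - q * q⁻¹ ^ k))
    (c : ℕ → ℕ → ℂ)
    (hc : ∀ n k, c n k = ∏ j ∈ Ico k n, g (j + 1) / (h n - h j))
    (v : ℕ → Polynomial ℂ)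
    (hv : ∀ k, v k = ∏ j ∈ range k, (X - C (x j)))
    (u : ℕ → Polynomial ℂ)
    (hu : ∀ n, u n = ∑ k ∈ range (n + 1), C (c n k) * v k)
    (n : ℕ) :
    u n = ∏ j ∈ range n, (X - C (b * q ^ j)) := by
  have hp0 : q⁻¹ ≠ 0 := inv_ne_zero hq
  have hp : ∀ i : ℕ, i ≠ 0 → q⁻¹ ^ i ≠ 1 := fun i hi => by
    simpa [inv_pow] using hq1 i (by exact_mod_cast hi)
  have hc' : c = verdeStarCoeff q⁻¹ b := by
    ext n k
    refine (hc n k).trans (prod_congr rfl fun j _ => ?_)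
    rw [hg, hh, hh, sub_sub_sub_cancel_right, pow_succ', mul_inv_cancel_left₀ hq]
  have hv' : v = newtonBasis fun j => q⁻¹ ^ j := by
    ext1 k
    simp only [hv, hx, newtonBasis]
  rw [hu, hc', hv']
  refine sum_C_mul_newtonBasis_eq_prod (verdeStarCoeff_self _ b) (fun n => ?_) (fun n k hk => ?_) n
  · simpa [inv_pow] using verdeStarCoeff_succ_zero b hp0 hp n
  · simpa [inv_pow] using verdeStarCoeff_succ_succ b hp0 hp hk
end

section
/- Let q ∈ ℂ, q ≠ 0, qⁿ ≠ 1 for nonzero n. With x_k = q^{−k}, h_k = q^{−k} − 1, g_k = q^{1−2k}(1 − q^k), v_k(x) = Π_{j=0}^{k−1}(x − q^{−j}), and c_{n,k} = Π_{j=k}^{n−1} g_{j+1}/(h_n − h_j), the polynomial u_n(x) = Σ_{k=0}^n c_{n,k} v_k(x) equals xⁿ; that is, the Newton expansion of the monomial xⁿ at the nodes q^{−j} has the coefficients c_{n,k}. -/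
open Polynomial Finset

noncomputable def vsD (q : ℂ) (n k : ℕ) : ℂ := ∏ j ∈ Ico k n, (q⁻¹ ^ n - q⁻¹ ^ j)

lemma vs_pow_ne_one (q : ℂ) (hq1 : ∀ n : ℤ, n ≠ 0 → q ^ n ≠ 1) {m : ℕ} (hm : m ≠ 0) :
    q ^ m ≠ 1 := by
  have := hq1 m (by exact_mod_cast hm)
  simpa using this

lemma vs_pow_inj (q : ℂ) (hq : q ≠ 0) (hq1 : ∀ n : ℤ, n ≠ 0 → q ^ n ≠ 1)
    {a b : ℕ} (hab : a ≠ b) : q⁻¹ ^ a ≠ q⁻¹ ^ b := by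
  wlog hlt : a < b generalizing a b
  · exact (this hab.symm (by omega)).symm
  intro heq
  have hb : q ^ (b - a) = 1 := by
    have h1 : q⁻¹ ^ a * q ^ a = 1 := by
      rw [← mul_pow, inv_mul_cancel₀ hq, one_pow]
    have h2 : q⁻¹ ^ b * q ^ b = 1 := by
      rw [← mul_pow, inv_mul_cancel₀ hq, one_pow]
    calc q ^ (b - a) = q⁻¹ ^ a * q ^ a * q ^ (b - a) := by rw [h1, one_mul]
      _ = q⁻¹ ^ a * q ^ b := by rw [mul_assoc, ← pow_add]; congr 2; omega
      _ = q⁻¹ ^ b * q ^ b := by rw [heq]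
      _ = 1 := h2
  exact vs_pow_ne_one q hq1 (by omega) hb

lemma vsD_ne_zero (q : ℂ) (hq : q ≠ 0) (hq1 : ∀ n : ℤ, n ≠ 0 → q ^ n ≠ 1)
    (n k : ℕ) : vsD q n k ≠ 0 := by
  unfold vsD
  apply Finset.prod_ne_zero_iff.mpr
  intro j hj
  rw [Finset.mem_Ico] at hj
  exact sub_ne_zero.mpr (vs_pow_inj q hq hq1 (by omega))

lemma vsD_peel (q : ℂ) {n k : ℕ} (h : k < n) :
    vsD q n k = (q⁻¹ ^ n - q⁻¹ ^ k) * vsD q n (k + 1) := by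
  unfold vsD
  rw [Finset.prod_eq_prod_Ico_succ_bot h]

lemma vsK (q : ℂ) (hq : q ≠ 0) :
    ∀ d k : ℕ, q⁻¹ ^ (k + d) * (q⁻¹ ^ (k + d + 1) - q⁻¹ ^ k) * vsD q (k + d) k
      = q⁻¹ ^ k * vsD q (k + d + 1) k := by
  intro d
  induction d with
  | zero =>
    intro k
    simp only [Nat.add_zero]
    unfold vsD
    rw [Finset.Ico_self, Finset.prod_empty]
    rw [show Ico k (k + 1) = {k} by rw [Nat.Ico_succ_singleton]]
    rw [Finset.prod_singleton]
    ring
  | succ d ih =>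
    intro k
    have hik := ih (k + 1)
    have hn : k + 1 + d = k + (d + 1) := by omega
    rw [hn] at hik
    set n := k + (d + 1) with hndef
    have hk : k < n := by omega
    have hD2 : vsD q n k = (q⁻¹ ^ n - q⁻¹ ^ k) * vsD q n (k + 1) := vsD_peel q hk
    have hD1 : vsD q (n + 1) k = (q⁻¹ ^ (n + 1) - q⁻¹ ^ k) * vsD q (n + 1) (k + 1) :=
      vsD_peel q (by omega)
    have hp : (q⁻¹ : ℂ) ≠ 0 := inv_ne_zero hq
    apply mul_left_cancel₀ hp
    linear_combination (q⁻¹ ^ (n + 1) * (q⁻¹ ^ (n + 1) - q⁻¹ ^ k)) * hD2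
      - q⁻¹ ^ (k + 1) * hD1 + (q⁻¹ ^ (n + 1) - q⁻¹ ^ k) * hik

lemma vsK' (q : ℂ) (hq : q ≠ 0) {k n : ℕ} (hkn : k ≤ n) :
    q⁻¹ ^ n * (q⁻¹ ^ (n + 1) - q⁻¹ ^ k) * vsD q n k = q⁻¹ ^ k * vsD q (n + 1) k := by
  obtain ⟨d, rfl⟩ := Nat.exists_eq_add_of_le hkn
  exact vsK q hq d k

theorem verdeStar_case5a (q : ℂ)
    (hq : q ≠ 0) (hq1 : ∀ n : ℤ, n ≠ 0 → q ^ n ≠ 1)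
    (h x g : ℕ → ℂ)
    (hx : ∀ k, x k = q⁻¹ ^ k)
    (hh : ∀ k, h k = q⁻¹ ^ k - 1)
    (hg : ∀ k, g k = q * q⁻¹ ^ (2 * k) * (1 - q ^ k))
    (c : ℕ → ℕ → ℂ)
    (hc : ∀ n k, c n k = ∏ j ∈ Ico k n, g (j + 1) / (h n - h j))
    (v : ℕ → Polynomial ℂ)
    (hv : ∀ k, v k = ∏ j ∈ range k, (X - C (x j)))
    (u : ℕ → Polynomial ℂ)
    (hu : ∀ n, u n = ∑ k ∈ range (n + 1), C (c n k) * v k)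
    (n : ℕ) :
    u n = X ^ n := by
  -- g in pure q⁻¹ form
  have hg1 : ∀ m : ℕ, g (m + 1) = q⁻¹ ^ (2 * m + 1) - q⁻¹ ^ m := by
    intro m
    rw [hg]
    have h1 : q * q⁻¹ = 1 := mul_inv_cancel₀ hq
    have h2 : q ^ (m + 1) * q⁻¹ ^ (m + 1) = 1 := by rw [← mul_pow, h1, one_pow]
    linear_combination (q⁻¹ ^ (2 * m + 1) - q⁻¹ ^ m) * h1 - q * q⁻¹ ^ (m + 1) * h2
  -- c in quotient form
  have hcQ : ∀ N K : ℕ, c N K = (∏ j ∈ Ico K N, g (j + 1)) / vsD q N K := by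
    intro N K
    rw [hc]
    rw [show (∏ j ∈ Ico K N, g (j + 1) / (h N - h j))
        = ∏ j ∈ Ico K N, g (j + 1) / (q⁻¹ ^ N - q⁻¹ ^ j) from
      Finset.prod_congr rfl fun j _ => by rw [hh N, hh j, sub_sub_sub_cancel_right]]
    rw [Finset.prod_div_distrib]
    rfl
  have hcM : ∀ N K : ℕ, c N K * vsD q N K = ∏ j ∈ Ico K N, g (j + 1) := by
    intro N K
    rw [hcQ]
    exact div_mul_cancel₀ _ (vsD_ne_zero q hq hq1 N K)
  -- the two coefficient recurrences
  have hR0 : ∀ N : ℕ, c (N + 1) 0 = c N 0 := by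
    intro N
    have h1 := hcM (N + 1) 0
    have h2 := hcM N 0
    have h3 : (∏ j ∈ Ico 0 (N + 1), g (j + 1)) = (∏ j ∈ Ico 0 N, g (j + 1)) * g (N + 1) :=
      Finset.prod_Ico_succ_top (Nat.zero_le N) _
    have hE0 : g (N + 1) * vsD q N 0 = vsD q (N + 1) 0 := by
      have hK := vsK' q hq (Nat.zero_le N)
      rw [hg1 N]
      linear_combination hK
    apply mul_right_cancel₀ (vsD_ne_zero q hq hq1 (N + 1) 0)
    linear_combination h1 + h3 - g (N + 1) * h2 + c N 0 * hE0
  have hR : ∀ N k : ℕ, k + 1 ≤ N →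
      c (N + 1) (k + 1) = c N k + q⁻¹ ^ (k + 1) * c N (k + 1) := by
    intro N k hk
    have hplt : k < N := hk
    have hDn1 : vsD q N (k + 1) ≠ 0 := vsD_ne_zero q hq hq1 N (k + 1)
    have hD11 : vsD q (N + 1) (k + 1) ≠ 0 := vsD_ne_zero q hq hq1 (N + 1) (k + 1)
    have hW : (q⁻¹ ^ N - q⁻¹ ^ k) ≠ 0 :=
      sub_ne_zero.mpr (vs_pow_inj q hq hq1 (by omega))
    have hc1 : c (N + 1) (k + 1) * vsD q (N + 1) (k + 1)
        = (∏ j ∈ Ico (k + 1) N, g (j + 1)) * g (N + 1) := by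
      rw [hcM (N + 1) (k + 1), Finset.prod_Ico_succ_top (by omega : k + 1 ≤ N)]
    have hc2 : c N k * vsD q N k = g (k + 1) * ∏ j ∈ Ico (k + 1) N, g (j + 1) := by
      rw [hcM N k, Finset.prod_eq_prod_Ico_succ_bot hplt]
    have hc3 : c N (k + 1) * vsD q N (k + 1) = ∏ j ∈ Ico (k + 1) N, g (j + 1) :=
      hcM N (k + 1)
    have hDk : vsD q N k = (q⁻¹ ^ N - q⁻¹ ^ k) * vsD q N (k + 1) := vsD_peel q hplt
    have hK := vsK' q hq (show k + 1 ≤ N from hk)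
    have hs : g (N + 1) * (q⁻¹ ^ N - q⁻¹ ^ k) * q⁻¹ ^ (k + 1)
        = (g (k + 1) + q⁻¹ ^ (k + 1) * (q⁻¹ ^ N - q⁻¹ ^ k))
          * (q⁻¹ ^ N * (q⁻¹ ^ (N + 1) - q⁻¹ ^ (k + 1))) := by
      rw [hg1 N, hg1 k]; ring
    have hE : g (N + 1) * (q⁻¹ ^ N - q⁻¹ ^ k) * vsD q N (k + 1)
        = (g (k + 1) + q⁻¹ ^ (k + 1) * (q⁻¹ ^ N - q⁻¹ ^ k)) * vsD q (N + 1) (k + 1) := by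
      apply mul_right_cancel₀ (pow_ne_zero (k + 1) (inv_ne_zero hq))
      linear_combination vsD q N (k + 1) * hs
        + (g (k + 1) + q⁻¹ ^ (k + 1) * (q⁻¹ ^ N - q⁻¹ ^ k)) * hK
    apply mul_right_cancel₀
      (mul_ne_zero hD11 (mul_ne_zero hW hDn1))
    linear_combination ((q⁻¹ ^ N - q⁻¹ ^ k) * vsD q N (k + 1)) * hc1
      - vsD q (N + 1) (k + 1) * hc2
      + c N k * vsD q (N + 1) (k + 1) * hDk
      - q⁻¹ ^ (k + 1) * (q⁻¹ ^ N - q⁻¹ ^ k) * vsD q (N + 1) (k + 1) * hc3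
      + (∏ j ∈ Ico (k + 1) N, g (j + 1)) * hE
  have ctop : ∀ N : ℕ, c N N = 1 := by
    intro N; rw [hc]; simp
  -- main induction
  induction n with
  | zero =>
    rw [hu 0]
    simp [hc, hv]
  | succ n ih =>
    have hxv : ∀ k : ℕ, X * v k = v (k + 1) + C (q⁻¹ ^ k) * v k := by
      intro k
      rw [hv (k + 1), hv k, Finset.prod_range_succ, hx k]
      ring
    have calc1 : X * u n = (∑ k ∈ range (n + 1), C (c n k) * v (k + 1))
        + ∑ k ∈ range (n + 1), C (q⁻¹ ^ k * c n k) * v k := by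
      rw [hu n, Finset.mul_sum, ← Finset.sum_add_distrib]
      refine Finset.sum_congr rfl fun k _ => ?_
      rw [mul_left_comm, hxv k]
      simp only [C_mul]
      ring
    have hRec' : ∀ k ∈ range n, C (c (n + 1) (k + 1)) * v (k + 1)
        = C (c n k) * v (k + 1) + C (q⁻¹ ^ (k + 1) * c n (k + 1)) * v (k + 1) := by
      intro k hk
      rw [Finset.mem_range] at hk
      rw [hR n k (by omega)]
      simp only [C_add, C_mul]
      ring
    have goal2 : u (n + 1) = X * u n := by
      calc u (n + 1)
          = (∑ k ∈ range (n + 1), C (c (n + 1) (k + 1)) * v (k + 1))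
            + C (c (n + 1) 0) * v 0 := by rw [hu (n + 1), Finset.sum_range_succ']
        _ = ((∑ k ∈ range n, C (c (n + 1) (k + 1)) * v (k + 1))
            + C (c (n + 1) (n + 1)) * v (n + 1)) + C (c (n + 1) 0) * v 0 := by
              rw [Finset.sum_range_succ]
        _ = ((∑ k ∈ range n, (C (c n k) * v (k + 1)
              + C (q⁻¹ ^ (k + 1) * c n (k + 1)) * v (k + 1)))
            + C (c n n) * v (n + 1)) + C (c n 0) * v 0 := by
              rw [Finset.sum_congr rfl hRec', ctop (n + 1), ctop n, hR0 n]
        _ = ((∑ k ∈ range n, C (c n k) * v (k + 1)) + C (c n n) * v (n + 1))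
            + ((∑ k ∈ range n, C (q⁻¹ ^ (k + 1) * c n (k + 1)) * v (k + 1))
              + C (q⁻¹ ^ 0 * c n 0) * v 0) := by
              rw [Finset.sum_add_distrib, pow_zero, one_mul]
              ring
        _ = (∑ k ∈ range (n + 1), C (c n k) * v (k + 1))
            + ∑ k ∈ range (n + 1), C (q⁻¹ ^ k * c n k) * v k := by
              rw [Finset.sum_range_succ, Finset.sum_range_succ']
        _ = X * u n := calc1.symm
    rw [goal2, ih, ← pow_succ']
end
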